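/- Let λ ∈ (0,1), α = (1−λ)/(1+λ), q(t), φ(t) = arccos q(t), and r(t) = √((t−α)(α⁻¹−t)) as above, and let ψ(t) ∈ (−π/2, 0) be the argument of 1 − λe^{iφ(t)}. Then tan ψ(t) = −r(t)/(t+1). -/

import Mathlib

/-!
With `q = cos φ`, the number `1 − λe^{iφ}` has real part `1 − λq` and imaginary part
`−λ sin φ = −λ√(1 − q²)`. For `q = q(t)` both factor through `(1 − λ²)/(2t)`:
`1 − λq = (1 − λ²)(t + 1)/(2t)` and `λ√(1 − q²) = (1 − λ²) r(t)/(2t)`, since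
`1 − q² = ((1 − λ²)/(2λt))² (t − α)(α⁻¹ − t)`. The first is positive and the second is
positive on `(α, α⁻¹)`, which places the argument in `(−π/2, 0)`, and their ratio is
`r(t)/(t + 1)`.
-/

open Real Set

namespace Complex

theorem arg_mem_Ioo_neg_pi_div_two_zero {z : ℂ} (hre : 0 < z.re) (him : z.im < 0) :
    z.arg ∈ Ioo (-(π / 2)) 0 :=
  ⟨(abs_lt.mp (abs_arg_lt_pi_div_two_iff.mpr (Or.inl hre))).1, arg_neg_iff.mpr him⟩

theorem re_one_sub_mul_exp_arccos (lam q : ℝ) (hq₁ : -1 ≤ q) (hq₂ : q ≤ 1) :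
    ((1 : ℂ) - lam * exp (I * arccos q)).re = 1 - lam * q := by
  rw [mul_comm I]
  simp [exp_ofReal_mul_I_re, cos_arccos hq₁ hq₂]

theorem im_one_sub_mul_exp_arccos (lam q : ℝ) :
    ((1 : ℂ) - lam * exp (I * arccos q)).im = -(lam * √(1 - q ^ 2)) := by
  rw [mul_comm I]
  simp [exp_ofReal_mul_I_im, sin_arccos]

end Complex

/-- The function `q(t)` of the paper, so that `φ(t) = arccos (q t)`. -/
noncomputable def cosPhase (lam t : ℝ) : ℝ :=
  (1 + lam ^ 2) / (2 * lam) - (1 - lam ^ 2) / (2 * lam * t)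

section cosPhase

variable {lam t : ℝ}

theorem one_sub_mul_cosPhase (hlam : lam ≠ 0) (ht : t ≠ 0) :
    1 - lam * cosPhase lam t = (1 - lam ^ 2) * (t + 1) / (2 * t) := by
  unfold cosPhase
  field_simp
  ring

theorem one_sub_cosPhase_sq (hlam : lam ≠ 0) (hlam₁ : 1 - lam ≠ 0) (hlam₂ : 1 + lam ≠ 0)
    (ht : t ≠ 0) :
    1 - cosPhase lam t ^ 2 = ((1 - lam ^ 2) / (2 * lam * t)) ^ 2 *
      ((t - (1 - lam) / (1 + lam)) * (((1 - lam) / (1 + lam))⁻¹ - t)) := by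
  unfold cosPhase
  rw [inv_div]
  field_simp
  ring

variable (hlam₀ : 0 < lam) (hlam₁ : lam < 1) (ht : 0 < t)
include hlam₀ hlam₁ ht

theorem one_sub_lam_sq_div_pos : 0 < (1 - lam ^ 2) / (2 * lam * t) :=
  div_pos (by nlinarith) (by positivity)

theorem sqrt_one_sub_cosPhase_sq :
    √(1 - cosPhase lam t ^ 2) = (1 - lam ^ 2) / (2 * lam * t) *
      √((t - (1 - lam) / (1 + lam)) * (((1 - lam) / (1 + lam))⁻¹ - t)) := by
  rw [one_sub_cosPhase_sq hlam₀.ne' (by linarith) (by linarith) ht.ne',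
    sqrt_mul (sq_nonneg _), sqrt_sq (one_sub_lam_sq_div_pos hlam₀ hlam₁ ht).le]

theorem cosPhase_sq_lt_one (htα : (1 - lam) / (1 + lam) < t)
    (htα' : t < ((1 - lam) / (1 + lam))⁻¹) :
    cosPhase lam t ^ 2 < 1 := by
  have hc := one_sub_lam_sq_div_pos hlam₀ hlam₁ ht
  have hr : 0 < (t - (1 - lam) / (1 + lam)) * (((1 - lam) / (1 + lam))⁻¹ - t) :=
    mul_pos (by linarith) (by linarith)
  have := one_sub_cosPhase_sq hlam₀.ne' (by linarith) (by linarith) ht.ne'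
  nlinarith [mul_pos (pow_pos hc 2) hr]

end cosPhase

/-- `ψ(t) = arg(1 − λe^{iφ(t)})` lies in `(−π/2, 0)` and `tan ψ(t) = −r(t)/(t+1)`. -/
theorem stmt10 (lam : ℝ) (hlam : lam ∈ Set.Ioo (0:ℝ) 1)
    (α : ℝ) (hα : α = (1 - lam) / (1 + lam))
    (t : ℝ) (ht : t ∈ Set.Ioo α α⁻¹)
    (φt : ℝ)
    (hφt : φt = Real.arccos ((1 + lam ^ 2) / (2 * lam) - (1 - lam ^ 2) / (2 * lam * t)))
    (ψt : ℝ)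
    (hψt : ψt = Complex.arg ((1 : ℂ) - (lam : ℂ) * Complex.exp (Complex.I * φt))) :
    ψt ∈ Set.Ioo (-(π / 2)) 0 ∧
      Real.tan ψt = -(Real.sqrt ((t - α) * (α⁻¹ - t))) / (t + 1) := by
  obtain ⟨hlam₀, hlam₁⟩ := hlam
  obtain ⟨htα, htα'⟩ := ht
  change φt = arccos (cosPhase lam t) at hφt
  subst hα hφt hψt
  have ht₀ : 0 < t := (div_pos (by linarith) (by linarith)).trans htα
  have hq := cosPhase_sq_lt_one hlam₀ hlam₁ ht₀ htα htα'
  have hlam₂ : 0 < 1 - lam ^ 2 := by nlinarith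
  have hre := Complex.re_one_sub_mul_exp_arccos lam _ (by nlinarith : -1 ≤ cosPhase lam t)
    (by nlinarith)
  have him := Complex.im_one_sub_mul_exp_arccos lam (cosPhase lam t)
  rw [one_sub_mul_cosPhase hlam₀.ne' ht₀.ne'] at hre
  refine ⟨Complex.arg_mem_Ioo_neg_pi_div_two_zero ?_ ?_, ?_⟩
  · rw [hre]
    exact div_pos (mul_pos hlam₂ (by linarith)) (by linarith)
  · rw [him, neg_lt_zero]
    exact mul_pos hlam₀ (sqrt_pos.mpr (by linarith))
  · rw [Complex.tan_arg, hre, him, sqrt_one_sub_cosPhase_sq hlam₀ hlam₁ ht₀]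
    field_simp
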